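/- Define, for real I ≥ 1, α*_2(I) = (1/(44I+22))·(9I² + 7I + 20 − √(81I⁴ + 126I³ + 409I² − 512I + 4)). Then the total second-round harvested share I·α*_2(I) tends to 0 as I → ∞ (in particular α*_2(I) → 0). -/

import Mathlib

open Filter

/-- The discriminant `81I⁴ + 126I³ + 409I² − 512I + 4`. -/
noncomputable def gameDisc (I : ℝ) : ℝ :=
  81 * I ^ 4 + 126 * I ^ 3 + 409 * I ^ 2 - 512 * I + 4

/-- The symmetric equilibrium second-round share with `I` players
(for `w₁ = 1`, `w₂ = 11/9`). -/
noncomputable def alpha2Eq (I : ℝ) : ℝ :=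
  1 / (44 * I + 22) * (9 * I ^ 2 + 7 * I + 20 - Real.sqrt (gameDisc I))

/-!
Rationalizing the numerator, `(9I² + 7I + 20)² − gameDisc I = 18 (44I + 22)`, so
`α₂*(I) = 18 / (9I² + 7I + 20 + √(gameDisc I)) ≤ 2 / I²`: the share decays like `I⁻²`,
and even the total share `I α₂*(I)` is at most `2 / I`.
-/

lemma gameDisc_nonneg {I : ℝ} (hI : 1 ≤ I) : 0 ≤ gameDisc I := by
  unfold gameDisc
  nlinarith [sq_nonneg (I - 1), sq_nonneg (I ^ 2 - 1)]

lemma alpha2Eq_eq_div {I : ℝ} (hI : 1 ≤ I) :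
    alpha2Eq I = 18 / (9 * I ^ 2 + 7 * I + 20 + Real.sqrt (gameDisc I)) := by
  have hsq : Real.sqrt (gameDisc I) ^ 2 = gameDisc I := Real.sq_sqrt (gameDisc_nonneg hI)
  have hden : 0 < 9 * I ^ 2 + 7 * I + 20 + Real.sqrt (gameDisc I) := by positivity
  have hden' : (0 : ℝ) < 44 * I + 22 := by positivity
  unfold alpha2Eq
  rw [div_mul_eq_mul_div, one_mul, div_eq_div_iff hden'.ne' hden.ne']
  unfold gameDisc at hsq ⊢
  linear_combination -hsq

lemma alpha2Eq_nonneg {I : ℝ} (hI : 1 ≤ I) : 0 ≤ alpha2Eq I := by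
  rw [alpha2Eq_eq_div hI]
  positivity

lemma mul_alpha2Eq_le {I : ℝ} (hI : 1 ≤ I) : I * alpha2Eq I ≤ 2 / I := by
  have hden : 0 < 9 * I ^ 2 + 7 * I + 20 + Real.sqrt (gameDisc I) := by positivity
  rw [alpha2Eq_eq_div hI, mul_div_assoc', div_le_div_iff₀ hden (by positivity)]
  nlinarith [Real.sqrt_nonneg (gameDisc I)]

lemma tendsto_mul_alpha2Eq_atTop :
    Tendsto (fun I : ℝ => I * alpha2Eq I) atTop (nhds 0) := by
  refine tendsto_of_tendsto_of_tendsto_of_le_of_le' tendsto_const_nhds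
    ((tendsto_const_nhds (x := (2 : ℝ))).div_atTop tendsto_id) ?_ ?_
  · filter_upwards [eventually_ge_atTop 1] with I hI
    exact mul_nonneg (by linarith) (alpha2Eq_nonneg hI)
  · filter_upwards [eventually_ge_atTop 1] with I hI
    exact mul_alpha2Eq_le hI

/-- nothing is left for round 2, Section 4.1.
The total second-round harvested share `I·α₂*(I)` tends to `0` as `I → ∞`;
in particular `α₂*(I) → 0`. -/
theorem total_second_round_share_tendsto_zero :
    Tendsto (fun I : ℝ => I * alpha2Eq I) atTop (nhds 0) ∧
      Tendsto alpha2Eq atTop (nhds 0) := by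
  refine ⟨tendsto_mul_alpha2Eq_atTop, ?_⟩
  have h := tendsto_mul_alpha2Eq_atTop.mul tendsto_inv_atTop_zero
  rw [zero_mul] at h
  refine h.congr' ?_
  filter_upwards [eventually_ne_atTop 0] with I hI
  rw [mul_comm I, mul_assoc, mul_inv_cancel₀ hI, mul_one]
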